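/- The assignment X ↦ 𝔤(X) is a contravariant functor on the category of finite sets and partially defined maps: for a partial map f : X ⇀ Y with domain U ⊆ X, define f^* : 𝔤(Y) → 𝔤(X) as (incl_U)_* ∘ (f|_U)^*, where incl_U : U → X is the inclusion. Then for composable partial maps f : X ⇀ Y and g : Y ⇀ Z one has (g∘f)^* = f^* ∘ g^* (the composite partial map g∘f having domain U ∩ f⁻¹(dom g)), and (id_X)^* = id_{𝔤(X)}. -/

import Mathlib

set_option maxHeartbeats 1000000


noncomputable section
attribute [local instance] Classical.propDecidable

/-- Generators `t_{ij}` of the Drinfeld–Kohno Lie algebra: pairs of distinct elements. -/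
def DKGen (T : Type) : Type := {p : T × T // p.1 ≠ p.2}

variable (k : Type) [Field k] [CharZero k]

/-- The relations: `t_{ij} = t_{ji}`, `[t_{ij}, t_{kl}] = 0` for `i,j,k,l` pairwise distinct,
and `[t_{ij}, t_{ik} + t_{jk}] = 0` for `i,j,k` pairwise distinct. -/
def DKRel (T : Type) : Set (FreeLieAlgebra k (DKGen T)) :=
  {x | (∃ (i j : T) (h : i ≠ j),
          x = FreeLieAlgebra.of k (⟨(i, j), h⟩ : DKGen T)
              - FreeLieAlgebra.of k (⟨(j, i), h.symm⟩ : DKGen T))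
     ∨ (∃ (i j l m : T) (hij : i ≠ j) (hlm : l ≠ m),
          i ≠ l ∧ i ≠ m ∧ j ≠ l ∧ j ≠ m ∧
          x = ⁅FreeLieAlgebra.of k (⟨(i, j), hij⟩ : DKGen T),
               FreeLieAlgebra.of k (⟨(l, m), hlm⟩ : DKGen T)⁆)
     ∨ (∃ (i j l : T) (hij : i ≠ j) (hil : i ≠ l) (hjl : j ≠ l),
          x = ⁅FreeLieAlgebra.of k (⟨(i, j), hij⟩ : DKGen T),
               FreeLieAlgebra.of k (⟨(i, l), hil⟩ : DKGen T)
               + FreeLieAlgebra.of k (⟨(j, l), hjl⟩ : DKGen T)⁆)}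

/-- The Lie ideal generated by the relations. -/
def DKIdeal (T : Type) : LieIdeal k (FreeLieAlgebra k (DKGen T)) :=
  LieSubmodule.lieSpan k _ (DKRel k T)

/-- The Drinfeld–Kohno Lie algebra `𝔤(T)`. -/
abbrev DK (T : Type) := FreeLieAlgebra k (DKGen T) ⧸ DKIdeal k T

/-- The generator `t_{ij} ∈ 𝔤(T)` (defined to be `0` when `i = j`). -/
def DKt (T : Type) (i j : T) : DK k T :=
  if h : i = j then 0
  else LieSubmodule.Quotient.mk (N := DKIdeal k T) (FreeLieAlgebra.of k (⟨(i, j), h⟩ : DKGen T))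

/-- `F` is the direct image homomorphism `f_* : 𝔤(S) → 𝔤(T)` along `f : S → T`,
i.e. `F (t_{ij}) = t_{f(i) f(j)}` for all distinct `i, j`. -/
def IsDirectImage {S T : Type} (f : S → T) (F : DK k S →ₗ⁅k⁆ DK k T) : Prop :=
  ∀ i j : S, i ≠ j → F (DKt k S i j) = DKt k T (f i) (f j)

/-- `G` is the inverse image homomorphism `f^* : 𝔤(T) → 𝔤(S)` along `f : S → T`, i.e.
`G (t_{ij}) = ∑_{f(p) = i, f(q) = j} t_{pq}` for all distinct `i, j`. -/
def IsInverseImage {S T : Type} [Fintype S] (f : S → T) (G : DK k T →ₗ⁅k⁆ DK k S) : Prop :=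
  ∀ i j : T, i ≠ j →
    G (DKt k T i j) =
      ∑ p ∈ Finset.univ.filter (fun p => f p = i),
        ∑ q ∈ Finset.univ.filter (fun q => f q = j), DKt k S p q



/-- The quotient map as a Lie algebra homomorphism. -/
def DKmk (T : Type) : FreeLieAlgebra k (DKGen T) →ₗ⁅k⁆ DK k T :=
  { (DKIdeal k T).toSubmodule.mkQ with
    toFun := LieSubmodule.Quotient.mk (N := DKIdeal k T)
    map_lie' := fun {_ _} => rfl }

omit [CharZero k] in
theorem DK_hom_ext {T : Type} {L : Type} [LieRing L] [LieAlgebra k L]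
    {F G : DK k T →ₗ⁅k⁆ L}
    (h : ∀ i j : T, i ≠ j → F (DKt k T i j) = G (DKt k T i j)) : F = G := by
  have key : F.comp (DKmk k T) = G.comp (DKmk k T) := by
    apply FreeLieAlgebra.hom_ext
    rintro ⟨⟨i, j⟩, hij⟩
    have : (DKmk k T) (FreeLieAlgebra.of k (⟨(i, j), hij⟩ : DKGen T)) = DKt k T i j := by
      simp [DKmk, DKt, hij]
      rfl
    simp only [LieHom.comp_apply, this]
    exact h i j hij
  ext x
  refine Quotient.inductionOn' x fun y => ?_
  exact LieHom.congr_fun key y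

lemma lieHom_map_sum {k L M : Type} [Field k] [LieRing L] [LieAlgebra k L]
    [LieRing M] [LieAlgebra k M] (F : L →ₗ⁅k⁆ M) {ι : Type*} (s : Finset ι) (f : ι → L) :
    F (∑ i ∈ s, f i) = ∑ i ∈ s, F (f i) :=
  map_sum F.toLinearMap f s


/-- `Finset.filter` with a fixed classical decidability instance. -/
def cFilter {α : Type*} (p : α → Prop) (s : Finset α) : Finset α :=
  @Finset.filter α p (fun a => Classical.propDecidable (p a)) s

lemma cFilter_eq {α : Type*} (p : α → Prop) [DecidablePred p] (s : Finset α) :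
    cFilter p s = s.filter p :=
  Finset.filter_congr_decidable ..

lemma mem_cFilter {α : Type*} {p : α → Prop} {s : Finset α} {x : α} :
    x ∈ cFilter p s ↔ x ∈ s ∧ p x := by
  rw [cFilter_eq]; exact Finset.mem_filter

open Finset in
lemma sum_subtype_filter' {X M : Type*} [Fintype X] [AddCommMonoid M]
    (U : Set X) [Fintype U] (P : X → Prop) (F : X → M) :
    ∑ p ∈ univ.filter (fun p : U => P ↑p), F ↑p
      = ∑ x ∈ cFilter (fun x => x ∈ U ∧ P x) univ, F x := by
  rw [cFilter_eq]
  refine Finset.sum_bij' (fun p _ => (p : X)) (fun x hx => ⟨x, ((Finset.mem_filter.mp hx).2).1⟩)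
    ?_ ?_ ?_ ?_ ?_
  · intro a ha
    simp only [Finset.mem_filter, Finset.mem_univ, true_and] at ha ⊢
    exact ⟨a.2, ha⟩
  · intro b hb
    simp only [Finset.mem_filter, Finset.mem_univ, true_and] at hb ⊢
    exact hb.2
  · intro a _; rfl
  · intro b _; rfl
  · intro a _; rfl

open Finset in
lemma double_sum_collapse {X Y Z M : Type*} [Fintype X] [Fintype Y] [AddCommMonoid M]
    (U : Set X) [Fintype U] (f : X → Y) (V : Set Y) [Fintype V] (g : Y → Z) (i : Z) (F : X → M) :
    ∑ v ∈ univ.filter (fun v : V => g ↑v = i),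
      ∑ p ∈ univ.filter (fun p : U => f ↑p = ↑v), F ↑p
      = ∑ x ∈ cFilter (fun x => x ∈ U ∧ f x ∈ V ∧ g (f x) = i) univ, F x := by
  rw [cFilter_eq]
  have h1 : ∀ y : Y, ∑ p ∈ univ.filter (fun p : U => f ↑p = y), F ↑p
      = ∑ x ∈ univ.filter (fun x => x ∈ U ∧ f x = y), F x := by
    intro y; rw [← cFilter_eq (fun x => x ∈ U ∧ f x = y)]; exact sum_subtype_filter' U (fun x => f x = y) F
  calc ∑ v ∈ univ.filter (fun v : V => g ↑v = i),
          ∑ p ∈ univ.filter (fun p : U => f ↑p = ↑v), F ↑p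
      = ∑ v ∈ univ.filter (fun v : V => g ↑v = i),
          ∑ x ∈ univ.filter (fun x => x ∈ U ∧ f x = ↑v), F x := by
        exact Finset.sum_congr rfl fun v _ => h1 v
    _ = ∑ y ∈ univ.filter (fun y => y ∈ V ∧ g y = i),
          ∑ x ∈ univ.filter (fun x => x ∈ U ∧ f x = y), F x := by
        rw [← cFilter_eq (fun y => y ∈ V ∧ g y = i)]
        exact sum_subtype_filter' V (fun y => g y = i)
          (fun y => ∑ x ∈ univ.filter (fun x => x ∈ U ∧ f x = y), F x)
    _ = ∑ y ∈ univ.filter (fun y => y ∈ V ∧ g y = i),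
          ∑ x ∈ (univ.filter (fun x => x ∈ U ∧ f x ∈ V ∧ g (f x) = i)).filter
              (fun x => f x = y), F x := by
        refine Finset.sum_congr rfl fun y hy => Finset.sum_congr ?_ fun _ _ => rfl
        simp only [Finset.mem_filter, Finset.mem_univ, true_and] at hy
        ext x
        simp only [Finset.mem_filter, Finset.mem_univ, true_and]
        constructor
        · rintro ⟨hxU, hxy⟩
          exact ⟨⟨hxU, hxy ▸ hy.1, by rw [hxy, hy.2]⟩, hxy⟩
        · rintro ⟨⟨hxU, _, _⟩, hxy⟩; exact ⟨hxU, hxy⟩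
    _ = ∑ x ∈ univ.filter (fun x => x ∈ U ∧ f x ∈ V ∧ g (f x) = i), F x := by
        apply Finset.sum_fiberwise_of_maps_to
        intro x hx
        simp only [Finset.mem_filter, Finset.mem_univ, true_and] at hx ⊢
        exact ⟨hx.2.1, hx.2.2⟩

/-- `X ↦ 𝔤(X)` is a contravariant functor on finite sets with partially
defined maps.  A partial map `X ⇀ Y` is modelled by its domain `U : Set X` together with
a function `f : X → Y` (only the restriction `f|_U` matters: all the characterizations
below use `f` only on `U`), and its action is `f^* = (incl_U)_* ∘ (f|_U)^*`.
For composable partial maps (the composite having domain `U ∩ f⁻¹(dom g)`) one has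
`(g ∘ f)^* = f^* ∘ g^*`, and `(id_X)^* = id`. -/
theorem inverseImage_partial_functorial (X Y Z : Type) [Fintype X] [Fintype Y] [Fintype Z]
    (U : Set X) (f : X → Y) (V : Set Y) (g : Y → Z)
    -- `f^* = (incl_U)_* ∘ (f|_U)^*` :
    (FU : DK k Y →ₗ⁅k⁆ DK k U) (hFU : IsInverseImage k (fun u : U => f u) FU)
    (IU : DK k U →ₗ⁅k⁆ DK k X) (hIU : IsDirectImage k (Subtype.val : U → X) IU)
    -- `g^* = (incl_V)_* ∘ (g|_V)^*` :
    (GV : DK k Z →ₗ⁅k⁆ DK k V) (hGV : IsInverseImage k (fun v : V => g v) GV)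
    (JV : DK k V →ₗ⁅k⁆ DK k Y) (hJV : IsDirectImage k (Subtype.val : V → Y) JV)
    -- `(g ∘ f)^*`, the composite partial map having domain `W = U ∩ f⁻¹(V)` :
    (HW : DK k Z →ₗ⁅k⁆ DK k ↥(U ∩ f ⁻¹' V))
    (hHW : IsInverseImage k (fun w : ↥(U ∩ f ⁻¹' V) => g (f w)) HW)
    (KW : DK k ↥(U ∩ f ⁻¹' V) →ₗ⁅k⁆ DK k X)
    (hKW : IsDirectImage k (Subtype.val : ↥(U ∩ f ⁻¹' V) → X) KW) :
    KW.comp HW = (IU.comp FU).comp (JV.comp GV)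
    ∧ (∀ (P : DK k X →ₗ⁅k⁆ DK k ↥(Set.univ : Set X))
         (Q : DK k ↥(Set.univ : Set X) →ₗ⁅k⁆ DK k X),
        IsInverseImage k (fun u : ↥(Set.univ : Set X) => (u : X)) P →
        IsDirectImage k (Subtype.val : ↥(Set.univ : Set X) → X) Q →
        Q.comp P = LieHom.id) := by
  constructor
  · apply DK_hom_ext (k := k)
    intro i j hij
    have hAB : ∀ m : Z,
        cFilter (fun x : X => x ∈ U ∩ f ⁻¹' V ∧ g (f x) = m) Finset.univ
          = cFilter (fun x : X => x ∈ U ∧ f x ∈ V ∧ g (f x) = m) Finset.univ := by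
      intro m; ext x; simp [mem_cFilter, Set.mem_inter_iff, and_assoc]
    have hL : (KW.comp HW) (DKt k Z i j)
        = ∑ x ∈ cFilter (fun x : X => x ∈ U ∧ f x ∈ V ∧ g (f x) = i) Finset.univ,
            ∑ y ∈ cFilter (fun y : X => y ∈ U ∧ f y ∈ V ∧ g (f y) = j) Finset.univ,
              DKt k X x y := by
      calc (KW.comp HW) (DKt k Z i j)
          = KW (∑ p ∈ Finset.univ.filter (fun p : ↥(U ∩ f ⁻¹' V) => g (f ↑p) = i),
              ∑ q ∈ Finset.univ.filter (fun q : ↥(U ∩ f ⁻¹' V) => g (f ↑q) = j),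
                DKt k (↥(U ∩ f ⁻¹' V)) p q) := by
            rw [LieHom.comp_apply, hHW i j hij]
        _ = ∑ p ∈ Finset.univ.filter (fun p : ↥(U ∩ f ⁻¹' V) => g (f ↑p) = i),
              ∑ q ∈ Finset.univ.filter (fun q : ↥(U ∩ f ⁻¹' V) => g (f ↑q) = j),
                DKt k X ↑p ↑q := by
            rw [lieHom_map_sum]
            refine Finset.sum_congr rfl fun p hp => ?_
            rw [lieHom_map_sum]
            refine Finset.sum_congr rfl fun q hq => ?_
            simp only [Finset.mem_filter, Finset.mem_univ, true_and] at hp hq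
            exact hKW p q (fun h => hij (by rw [← hp, ← hq, h]))
        _ = ∑ x ∈ cFilter (fun x : X => x ∈ U ∩ f ⁻¹' V ∧ g (f x) = i) Finset.univ,
              ∑ q ∈ Finset.univ.filter (fun q : ↥(U ∩ f ⁻¹' V) => g (f ↑q) = j),
                DKt k X x ↑q :=
            sum_subtype_filter' (U ∩ f ⁻¹' V) (fun x => g (f x) = i)
              (fun x => ∑ q ∈ Finset.univ.filter
                (fun q : ↥(U ∩ f ⁻¹' V) => g (f ↑q) = j), DKt k X x ↑q)
        _ = ∑ x ∈ cFilter (fun x : X => x ∈ U ∩ f ⁻¹' V ∧ g (f x) = i) Finset.univ,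
              ∑ y ∈ cFilter (fun y : X => y ∈ U ∩ f ⁻¹' V ∧ g (f y) = j) Finset.univ,
                DKt k X x y :=
            Finset.sum_congr rfl fun x _ =>
              sum_subtype_filter' (U ∩ f ⁻¹' V) (fun y => g (f y) = j) (fun y => DKt k X x y)
        _ = ∑ x ∈ cFilter (fun x : X => x ∈ U ∧ f x ∈ V ∧ g (f x) = i) Finset.univ,
              ∑ y ∈ cFilter (fun y : X => y ∈ U ∧ f y ∈ V ∧ g (f y) = j) Finset.univ,
                DKt k X x y := by
            rw [hAB i, hAB j]
    have hR : ((IU.comp FU).comp (JV.comp GV)) (DKt k Z i j)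
        = ∑ x ∈ cFilter (fun x : X => x ∈ U ∧ f x ∈ V ∧ g (f x) = i) Finset.univ,
            ∑ y ∈ cFilter (fun y : X => y ∈ U ∧ f y ∈ V ∧ g (f y) = j) Finset.univ,
              DKt k X x y := by
      have step : ∀ v ∈ Finset.univ.filter (fun v : V => g ↑v = i),
          ∀ w ∈ Finset.univ.filter (fun w : V => g ↑w = j),
          IU (FU (JV (DKt k V v w)))
            = ∑ p ∈ Finset.univ.filter (fun p : U => f ↑p = ↑v),
                ∑ q ∈ Finset.univ.filter (fun q : U => f ↑q = ↑w),
                  DKt k X ↑p ↑q := by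
        intro v hv w hw
        simp only [Finset.mem_filter, Finset.mem_univ, true_and] at hv hw
        have hgvw : (v : Y) ≠ (w : Y) := fun h => hij (by rw [← hv, ← hw, h])
        have hvw : v ≠ w := fun h => hgvw (by rw [h])
        rw [hJV v w hvw, hFU (v : Y) (w : Y) hgvw, lieHom_map_sum]
        refine Finset.sum_congr rfl fun p hp => ?_
        rw [lieHom_map_sum]
        refine Finset.sum_congr rfl fun q hq => ?_
        simp only [Finset.mem_filter, Finset.mem_univ, true_and] at hp hq
        exact hIU p q (fun h => hgvw (by rw [← hp, ← hq, h]))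
      calc ((IU.comp FU).comp (JV.comp GV)) (DKt k Z i j)
          = IU (FU (JV (∑ v ∈ Finset.univ.filter (fun v : V => g ↑v = i),
              ∑ w ∈ Finset.univ.filter (fun w : V => g ↑w = j),
                DKt k V v w))) := by
            simp only [LieHom.comp_apply]
            rw [hGV i j hij]
        _ = ∑ v ∈ Finset.univ.filter (fun v : V => g ↑v = i),
              ∑ w ∈ Finset.univ.filter (fun w : V => g ↑w = j),
                IU (FU (JV (DKt k V v w))) := by
            rw [lieHom_map_sum, lieHom_map_sum, lieHom_map_sum]
            refine Finset.sum_congr rfl fun v _ => ?_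
            rw [lieHom_map_sum, lieHom_map_sum, lieHom_map_sum]
        _ = ∑ v ∈ Finset.univ.filter (fun v : V => g ↑v = i),
              ∑ w ∈ Finset.univ.filter (fun w : V => g ↑w = j),
                ∑ p ∈ Finset.univ.filter (fun p : U => f ↑p = ↑v),
                  ∑ q ∈ Finset.univ.filter (fun q : U => f ↑q = ↑w),
                    DKt k X ↑p ↑q :=
            Finset.sum_congr rfl fun v hv => Finset.sum_congr rfl fun w hw => step v hv w hw
        _ = ∑ v ∈ Finset.univ.filter (fun v : V => g ↑v = i),
              ∑ p ∈ Finset.univ.filter (fun p : U => f ↑p = ↑v),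
                ∑ w ∈ Finset.univ.filter (fun w : V => g ↑w = j),
                  ∑ q ∈ Finset.univ.filter (fun q : U => f ↑q = ↑w),
                    DKt k X ↑p ↑q :=
            Finset.sum_congr rfl fun v _ => Finset.sum_comm
        _ = ∑ v ∈ Finset.univ.filter (fun v : V => g ↑v = i),
              ∑ p ∈ Finset.univ.filter (fun p : U => f ↑p = ↑v),
                ∑ y ∈ cFilter (fun y : X => y ∈ U ∧ f y ∈ V ∧ g (f y) = j) Finset.univ,
                  DKt k X ↑p y :=
            Finset.sum_congr rfl fun v _ => Finset.sum_congr rfl fun p _ =>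
              double_sum_collapse U f V g j (fun y => DKt k X ↑p y)
        _ = ∑ x ∈ cFilter (fun x : X => x ∈ U ∧ f x ∈ V ∧ g (f x) = i) Finset.univ,
              ∑ y ∈ cFilter (fun y : X => y ∈ U ∧ f y ∈ V ∧ g (f y) = j) Finset.univ,
                DKt k X x y :=
            double_sum_collapse U f V g i
              (fun x => ∑ y ∈ cFilter
                (fun y : X => y ∈ U ∧ f y ∈ V ∧ g (f y) = j) Finset.univ, DKt k X x y)
    rw [hL, hR]
  · intro P Q hP hQ
    apply DK_hom_ext (k := k)
    intro i j hij
    rw [LieHom.comp_apply, LieHom.id_apply]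
    have e2 : ∀ m : X,
        cFilter (fun x : X => x ∈ (Set.univ : Set X) ∧ x = m) Finset.univ = {m} := by
      intro m; ext x; simp [mem_cFilter]
    calc Q (P (DKt k X i j))
        = Q (∑ p ∈ Finset.univ.filter (fun p : ↥(Set.univ : Set X) => (p : X) = i),
            ∑ q ∈ Finset.univ.filter (fun q : ↥(Set.univ : Set X) => (q : X) = j),
              DKt k (↥(Set.univ : Set X)) p q) := by rw [hP i j hij]
      _ = ∑ p ∈ Finset.univ.filter (fun p : ↥(Set.univ : Set X) => (p : X) = i),
            ∑ q ∈ Finset.univ.filter (fun q : ↥(Set.univ : Set X) => (q : X) = j),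
              DKt k X ↑p ↑q := by
          rw [lieHom_map_sum]
          refine Finset.sum_congr rfl fun p hp => ?_
          rw [lieHom_map_sum]
          refine Finset.sum_congr rfl fun q hq => ?_
          simp only [Finset.mem_filter, Finset.mem_univ, true_and] at hp hq
          exact hQ p q (fun h => hij (by rw [← hp, ← hq, h]))
      _ = ∑ x ∈ cFilter (fun x : X => x ∈ (Set.univ : Set X) ∧ x = i) Finset.univ,
            ∑ q ∈ Finset.univ.filter (fun q : ↥(Set.univ : Set X) => (q : X) = j),
              DKt k X x ↑q :=
          sum_subtype_filter' (Set.univ : Set X) (fun x => x = i)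
            (fun x => ∑ q ∈ Finset.univ.filter
              (fun q : ↥(Set.univ : Set X) => (q : X) = j), DKt k X x ↑q)
      _ = ∑ x ∈ cFilter (fun x : X => x ∈ (Set.univ : Set X) ∧ x = i) Finset.univ,
            ∑ y ∈ cFilter (fun y : X => y ∈ (Set.univ : Set X) ∧ y = j) Finset.univ,
              DKt k X x y :=
          Finset.sum_congr rfl fun x _ =>
            sum_subtype_filter' (Set.univ : Set X) (fun y => y = j) (fun y => DKt k X x y)
      _ = DKt k X i j := by rw [e2 i, e2 j, Finset.sum_singleton, Finset.sum_singleton]
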